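/- arXiv:1103.2485 — 2 statements merged into one kernel-verified Lean document; each statement's English description precedes it below -/
import Mathlib

section
/- Let U ⊆ ℂ be open, let u, h₁, h₂ : ℂ → ℝ and ξ₁, ξ₂, σ : ℂ → ℂ be ℝ-differentiable on U, and set aᵢ := (e^{−u}·ξᵢ + e^{u}·hᵢ)/√2 and bᵢ := (e^{−u}·ξᵢ − e^{u}·hᵢ)/√2 for i = 1,2. Assume the Codazzi equations hold on U: e^{2u}·(∂h₁ + h₂·σ) = ∂̄ξ₁ + ξ₂·conj(σ) and e^{2u}·(∂h₂ − h₁·σ) = ∂̄ξ₂ − ξ₁·conj(σ). Then on U: ∂̄a₁ + (∂̄u)·b₁ + a₂·conj(σ) = (e^{u}/√2)·(∂h₁ + ∂̄h₁ + h₂·(σ + conj(σ))); ∂̄a₂ + (∂̄u)·b₂ − a₁·conj(σ) = (e^{u}/√2)·(∂h₂ + ∂̄h₂ − h₁·(σ + conj(σ))); ∂̄b₁ + (∂̄u)·a₁ + b₂·conj(σ) = (e^{u}/√2)·(∂h₁ − ∂̄h₁ + h₂·(σ − conj(σ))); and ∂̄b₂ + (∂̄u)·a₂ − b₁·conj(σ)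 = (e^{u}/√2)·(∂h₂ − ∂̄h₂ − h₁·(σ − conj(σ))). -/
/-! The whole computation rests on the twisted product rule
`∂̄(e^{±u} f) = e^{±u} (∂̄f ± (∂̄u) f)`: adding `(∂̄u) bᵢ` to `∂̄aᵢ` (or `(∂̄u) aᵢ` to `∂̄bᵢ`)
cancels every derivative of `u`, leaving `(e^{-u} ∂̄ξᵢ ± e^{u} ∂̄hᵢ)/√2`. The Codazzi equations,
multiplied by `e^{-u}`, then trade `e^{-u}(∂̄ξᵢ + …)` for `e^{u}(∂hᵢ + …)`. -/

open Complex Matrix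

noncomputable section

attribute [local instance] Matrix.normedAddCommGroup Matrix.normedSpace

/-- Wirtinger derivative ∂G := (1/2)(∂ₓG − i∂ᵧG). -/
def wDz {E : Type*} [NormedAddCommGroup E] [NormedSpace ℂ E] (G : ℂ → E) (z : ℂ) : E :=
  (2⁻¹ : ℂ) • (fderiv ℝ G z 1 - Complex.I • fderiv ℝ G z Complex.I)

/-- Wirtinger derivative ∂̄G := (1/2)(∂ₓG + i∂ᵧG). -/
def wDzBar {E : Type*} [NormedAddCommGroup E] [NormedSpace ℂ E] (G : ℂ → E) (z : ℂ) : E :=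
  (2⁻¹ : ℂ) • (fderiv ℝ G z 1 + Complex.I • fderiv ℝ G z Complex.I)

/-- The 𝔭-part matrix A_p(r, a₁, a₂, b₁, b₂). -/
def Ap (r a₁ a₂ b₁ b₂ : ℂ) : Matrix (Fin 5) (Fin 5) ℂ :=
  !![0, -r, Complex.I * r, 0, 0;
     r, 0, 0, -a₁, -a₂;
     -(Complex.I * r), 0, 0, -(Complex.I * b₁), -(Complex.I * b₂);
     0, a₁, Complex.I * b₁, 0, 0;
     0, a₂, Complex.I * b₂, 0, 0]

/-- The coefficient aᵢ = (e^{-u}ξᵢ + e^{u}hᵢ)/√2. -/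
def aCoef (u : ℂ → ℝ) (ξ : ℂ → ℂ) (h : ℂ → ℝ) (z : ℂ) : ℂ :=
  ((Real.exp (-u z) : ℝ) * ξ z + (Real.exp (u z) : ℝ) * (h z : ℂ)) / (Real.sqrt 2 : ℝ)

/-- The coefficient bᵢ = (e^{-u}ξᵢ - e^{u}hᵢ)/√2. -/
def bCoef (u : ℂ → ℝ) (ξ : ℂ → ℂ) (h : ℂ → ℝ) (z : ℂ) : ℂ :=
  ((Real.exp (-u z) : ℝ) * ξ z - (Real.exp (u z) : ℝ) * (h z : ℂ)) / (Real.sqrt 2 : ℝ)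

section Wirtinger

variable {E : Type*} [NormedAddCommGroup E] [NormedSpace ℂ E] {F G : ℂ → E} {z : ℂ}

theorem wDzBar_add (hF : DifferentiableAt ℝ F z) (hG : DifferentiableAt ℝ G z) :
    wDzBar (fun w => F w + G w) z = wDzBar F z + wDzBar G z := by
  simp only [wDzBar, fderiv_fun_add hF hG, _root_.add_apply]
  module

theorem wDzBar_sub (hF : DifferentiableAt ℝ F z) (hG : DifferentiableAt ℝ G z) :
    wDzBar (fun w => F w - G w) z = wDzBar F z - wDzBar G z := by
  simp only [wDzBar, fderiv_fun_sub hF hG, _root_.sub_apply]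
  module

theorem wDzBar_neg : wDzBar (fun w => -F w) z = -wDzBar F z := by
  simp only [wDzBar, fderiv_fun_neg, _root_.neg_apply]
  module

end Wirtinger

section ComplexValued

variable {f g : ℂ → ℂ} {z : ℂ}

theorem wDzBar_mul (hf : DifferentiableAt ℝ f z) (hg : DifferentiableAt ℝ g z) :
    wDzBar (fun w => f w * g w) z = wDzBar f z * g z + f z * wDzBar g z := by
  simp only [wDzBar, fderiv_fun_mul hf hg, _root_.add_apply, _root_.smul_apply, smul_eq_mul]
  ring

theorem wDzBar_cexp (hf : DifferentiableAt ℝ f z) :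
    wDzBar (fun w => Complex.exp (f w)) z = Complex.exp (f z) * wDzBar f z := by
  simp only [wDzBar, hf.hasFDerivAt.cexp.fderiv, _root_.smul_apply, smul_eq_mul]
  ring

theorem wDzBar_div_const (hf : DifferentiableAt ℝ f z) (c : ℂ) :
    wDzBar (fun w => f w / c) z = wDzBar f z / c := by
  simp only [div_eq_mul_inv, wDzBar, fderiv_mul_const hf, _root_.smul_apply, smul_eq_mul]
  ring

theorem wDzBar_cexp_mul (hg : DifferentiableAt ℝ g z) (hf : DifferentiableAt ℝ f z) :
    wDzBar (fun w => Complex.exp (g w) * f w) z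
      = Complex.exp (g z) * wDzBar f z + wDzBar g z * (Complex.exp (g z) * f z) := by
  rw [wDzBar_mul hg.cexp hf, wDzBar_cexp hg]
  ring

end ComplexValued

section Coefficients

variable {u h : ℂ → ℝ} {ξ : ℂ → ℂ} {z : ℂ}

theorem aCoef_eq_cexp :
    aCoef u ξ h = fun w =>
      (Complex.exp (-(u w : ℂ)) * ξ w + Complex.exp (u w : ℂ) * (h w : ℂ)) / (Real.sqrt 2 : ℂ) := by
  funext w
  simp [aCoef, Complex.ofReal_exp]

theorem bCoef_eq_cexp :
    bCoef u ξ h = fun w =>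
      (Complex.exp (-(u w : ℂ)) * ξ w - Complex.exp (u w : ℂ) * (h w : ℂ)) / (Real.sqrt 2 : ℂ) := by
  funext w
  simp [bCoef, Complex.ofReal_exp]

variable (hu : DifferentiableAt ℝ (fun w => (u w : ℂ)) z) (hξ : DifferentiableAt ℝ ξ z)
  (hh : DifferentiableAt ℝ (fun w => (h w : ℂ)) z)
include hu hξ hh

theorem wDzBar_aCoef_add_mul_bCoef :
    wDzBar (aCoef u ξ h) z + wDzBar (fun w => (u w : ℂ)) z * bCoef u ξ h z
      = ((Real.exp (-u z) : ℝ) * wDzBar ξ z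
          + (Real.exp (u z) : ℝ) * wDzBar (fun w => (h w : ℂ)) z) / (Real.sqrt 2 : ℝ) := by
  have hP : DifferentiableAt ℝ (fun w => Complex.exp (-(u w : ℂ)) * ξ w) z :=
    hu.fun_neg.cexp.mul hξ
  have hQ : DifferentiableAt ℝ (fun w => Complex.exp (u w : ℂ) * (h w : ℂ)) z :=
    hu.cexp.mul hh
  rw [aCoef_eq_cexp, bCoef_eq_cexp, wDzBar_div_const (hP.fun_add hQ), wDzBar_add hP hQ,
    wDzBar_cexp_mul hu.fun_neg hξ, wDzBar_cexp_mul hu hh, wDzBar_neg]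
  push_cast [Complex.ofReal_exp]
  ring

theorem wDzBar_bCoef_add_mul_aCoef :
    wDzBar (bCoef u ξ h) z + wDzBar (fun w => (u w : ℂ)) z * aCoef u ξ h z
      = ((Real.exp (-u z) : ℝ) * wDzBar ξ z
          - (Real.exp (u z) : ℝ) * wDzBar (fun w => (h w : ℂ)) z) / (Real.sqrt 2 : ℝ) := by
  have hP : DifferentiableAt ℝ (fun w => Complex.exp (-(u w : ℂ)) * ξ w) z :=
    hu.fun_neg.cexp.mul hξ
  have hQ : DifferentiableAt ℝ (fun w => Complex.exp (u w : ℂ) * (h w : ℂ)) z :=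
    hu.cexp.mul hh
  rw [aCoef_eq_cexp, bCoef_eq_cexp, wDzBar_div_const (hP.fun_sub hQ), wDzBar_sub hP hQ,
    wDzBar_cexp_mul hu.fun_neg hξ, wDzBar_cexp_mul hu hh, wDzBar_neg]
  push_cast [Complex.ofReal_exp]
  ring

end Coefficients

theorem tension_coefficients_via_codazzi_general
    (U : Set ℂ)
    (u h₁ h₂ : ℂ → ℝ) (ξ₁ ξ₂ σ : ℂ → ℂ)
    (hu : ∀ z ∈ U, DifferentiableAt ℝ (fun w => (u w : ℂ)) z)
    (hh₁ : ∀ z ∈ U, DifferentiableAt ℝ (fun w => (h₁ w : ℂ)) z)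
    (hh₂ : ∀ z ∈ U, DifferentiableAt ℝ (fun w => (h₂ w : ℂ)) z)
    (hξ₁ : ∀ z ∈ U, DifferentiableAt ℝ ξ₁ z)
    (hξ₂ : ∀ z ∈ U, DifferentiableAt ℝ ξ₂ z)
    (codazzi₁ : ∀ z ∈ U,
      (Real.exp (2 * u z) : ℂ) * (wDz (fun w => (h₁ w : ℂ)) z + (h₂ z : ℂ) * σ z)
        = wDzBar ξ₁ z + ξ₂ z * (starRingEnd ℂ) (σ z))
    (codazzi₂ : ∀ z ∈ U,
      (Real.exp (2 * u z) : ℂ) * (wDz (fun w => (h₂ w : ℂ)) z - (h₁ z : ℂ) * σ z)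
        = wDzBar ξ₂ z - ξ₁ z * (starRingEnd ℂ) (σ z)) :
    ∀ z ∈ U,
      (wDzBar (aCoef u ξ₁ h₁) z + wDzBar (fun w => (u w : ℂ)) z * bCoef u ξ₁ h₁ z
          + aCoef u ξ₂ h₂ z * (starRingEnd ℂ) (σ z)
        = ((Real.exp (u z) / Real.sqrt 2 : ℝ) : ℂ)
            * (wDz (fun w => (h₁ w : ℂ)) z + wDzBar (fun w => (h₁ w : ℂ)) z
               + (h₂ z : ℂ) * (σ z + (starRingEnd ℂ) (σ z)))) ∧
      (wDzBar (aCoef u ξ₂ h₂) z + wDzBar (fun w => (u w : ℂ)) z * bCoef u ξ₂ h₂ z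
          - aCoef u ξ₁ h₁ z * (starRingEnd ℂ) (σ z)
        = ((Real.exp (u z) / Real.sqrt 2 : ℝ) : ℂ)
            * (wDz (fun w => (h₂ w : ℂ)) z + wDzBar (fun w => (h₂ w : ℂ)) z
               - (h₁ z : ℂ) * (σ z + (starRingEnd ℂ) (σ z)))) ∧
      (wDzBar (bCoef u ξ₁ h₁) z + wDzBar (fun w => (u w : ℂ)) z * aCoef u ξ₁ h₁ z
          + bCoef u ξ₂ h₂ z * (starRingEnd ℂ) (σ z)
        = ((Real.exp (u z) / Real.sqrt 2 : ℝ) : ℂ)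
            * (wDz (fun w => (h₁ w : ℂ)) z - wDzBar (fun w => (h₁ w : ℂ)) z
               + (h₂ z : ℂ) * (σ z - (starRingEnd ℂ) (σ z)))) ∧
      (wDzBar (bCoef u ξ₂ h₂) z + wDzBar (fun w => (u w : ℂ)) z * aCoef u ξ₂ h₂ z
          - bCoef u ξ₁ h₁ z * (starRingEnd ℂ) (σ z)
        = ((Real.exp (u z) / Real.sqrt 2 : ℝ) : ℂ)
            * (wDz (fun w => (h₂ w : ℂ)) z - wDzBar (fun w => (h₂ w : ℂ)) z
               - (h₁ z : ℂ) * (σ z - (starRingEnd ℂ) (σ z)))) := by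
  intro z hz
  have hexp : ((Real.exp (-u z) : ℝ) : ℂ) * (Real.exp (2 * u z) : ℝ) = (Real.exp (u z) : ℝ) := by
    rw [← Complex.ofReal_mul, ← Real.exp_add]
    ring_nf
  have ha₁ := wDzBar_aCoef_add_mul_bCoef (hu z hz) (hξ₁ z hz) (hh₁ z hz)
  have ha₂ := wDzBar_aCoef_add_mul_bCoef (hu z hz) (hξ₂ z hz) (hh₂ z hz)
  have hb₁ := wDzBar_bCoef_add_mul_aCoef (hu z hz) (hξ₁ z hz) (hh₁ z hz)
  have hb₂ := wDzBar_bCoef_add_mul_aCoef (hu z hz) (hξ₂ z hz) (hh₂ z hz)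
  rw [Complex.ofReal_div]
  simp only [aCoef, bCoef] at ha₁ ha₂ hb₁ hb₂ ⊢
  set e : ℂ := (Real.exp (-u z) : ℝ) / (Real.sqrt 2 : ℝ)
  set D₁ := wDz (fun w => (h₁ w : ℂ)) z + (h₂ z : ℂ) * σ z
  set D₂ := wDz (fun w => (h₂ w : ℂ)) z - (h₁ z : ℂ) * σ z
  refine ⟨?_, ?_, ?_, ?_⟩
  · linear_combination ha₁ - e * codazzi₁ z hz + D₁ / (Real.sqrt 2 : ℝ) * hexp
  · linear_combination ha₂ - e * codazzi₂ z hz + D₂ / (Real.sqrt 2 : ℝ) * hexp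
  · linear_combination hb₁ - e * codazzi₁ z hz + D₁ / (Real.sqrt 2 : ℝ) * hexp
  · linear_combination hb₂ - e * codazzi₂ z hz + D₂ / (Real.sqrt 2 : ℝ) * hexp

/-- using the Codazzi equations, the tension coefficients
A₁, A₂, B₁, B₂ can be rewritten purely in terms of the mean curvature
components h₁, h₂ and the normal connection coefficient σ. -/
theorem tension_coefficients_via_codazzi
    (U : Set ℂ) (hU : IsOpen U)
    (u h₁ h₂ : ℂ → ℝ) (ξ₁ ξ₂ σ : ℂ → ℂ)
    (hu : ∀ z ∈ U, DifferentiableAt ℝ (fun w => (u w : ℂ)) z)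
    (hh₁ : ∀ z ∈ U, DifferentiableAt ℝ (fun w => (h₁ w : ℂ)) z)
    (hh₂ : ∀ z ∈ U, DifferentiableAt ℝ (fun w => (h₂ w : ℂ)) z)
    (hξ₁ : ∀ z ∈ U, DifferentiableAt ℝ ξ₁ z)
    (hξ₂ : ∀ z ∈ U, DifferentiableAt ℝ ξ₂ z)
    (hσ : ∀ z ∈ U, DifferentiableAt ℝ σ z)
    (codazzi₁ : ∀ z ∈ U,
      (Real.exp (2 * u z) : ℂ) * (wDz (fun w => (h₁ w : ℂ)) z + (h₂ z : ℂ) * σ z)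
        = wDzBar ξ₁ z + ξ₂ z * (starRingEnd ℂ) (σ z))
    (codazzi₂ : ∀ z ∈ U,
      (Real.exp (2 * u z) : ℂ) * (wDz (fun w => (h₂ w : ℂ)) z - (h₁ z : ℂ) * σ z)
        = wDzBar ξ₂ z - ξ₁ z * (starRingEnd ℂ) (σ z)) :
    ∀ z ∈ U,
      (wDzBar (aCoef u ξ₁ h₁) z + wDzBar (fun w => (u w : ℂ)) z * bCoef u ξ₁ h₁ z
          + aCoef u ξ₂ h₂ z * (starRingEnd ℂ) (σ z)
        = ((Real.exp (u z) / Real.sqrt 2 : ℝ) : ℂ)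
            * (wDz (fun w => (h₁ w : ℂ)) z + wDzBar (fun w => (h₁ w : ℂ)) z
               + (h₂ z : ℂ) * (σ z + (starRingEnd ℂ) (σ z)))) ∧
      (wDzBar (aCoef u ξ₂ h₂) z + wDzBar (fun w => (u w : ℂ)) z * bCoef u ξ₂ h₂ z
          - aCoef u ξ₁ h₁ z * (starRingEnd ℂ) (σ z)
        = ((Real.exp (u z) / Real.sqrt 2 : ℝ) : ℂ)
            * (wDz (fun w => (h₂ w : ℂ)) z + wDzBar (fun w => (h₂ w : ℂ)) z
               - (h₁ z : ℂ) * (σ z + (starRingEnd ℂ) (σ z)))) ∧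
      (wDzBar (bCoef u ξ₁ h₁) z + wDzBar (fun w => (u w : ℂ)) z * aCoef u ξ₁ h₁ z
          + bCoef u ξ₂ h₂ z * (starRingEnd ℂ) (σ z)
        = ((Real.exp (u z) / Real.sqrt 2 : ℝ) : ℂ)
            * (wDz (fun w => (h₁ w : ℂ)) z - wDzBar (fun w => (h₁ w : ℂ)) z
               + (h₂ z : ℂ) * (σ z - (starRingEnd ℂ) (σ z)))) ∧
      (wDzBar (bCoef u ξ₂ h₂) z + wDzBar (fun w => (u w : ℂ)) z * aCoef u ξ₂ h₂ z
          - bCoef u ξ₁ h₁ z * (starRingEnd ℂ) (σ z)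
        = ((Real.exp (u z) / Real.sqrt 2 : ℝ) : ℂ)
            * (wDz (fun w => (h₂ w : ℂ)) z - wDzBar (fun w => (h₂ w : ℂ)) z
               - (h₁ z : ℂ) * (σ z - (starRingEnd ℂ) (σ z)))) :=
  tension_coefficients_via_codazzi_general U u h₁ h₂ ξ₁ ξ₂ σ hu hh₁ hh₂ hξ₁ hξ₂ codazzi₁ codazzi₂
end
end

section
/- Let U ⊆ ℂ be open, let u, h₁, h₂ : ℂ → ℝ and ξ₁, ξ₂, σ : ℂ → ℂ be ℝ-differentiable on U, set aᵢ := (e^{−u}·ξᵢ + e^{u}·hᵢ)/√2 and bᵢ := (e^{−u}·ξᵢ − e^{u}·hᵢ)/√2 (i = 1,2), and let λ ∈ ℂ with |λ| = 1. Let A_k be the 5×5 complex matrix whose only nonzero entries are (1,2) ↦ i·∂u, (2,1) ↦ −i·∂u, (3,4) ↦ σ, (4,3) ↦ −σ; set A_λ := λ⁻¹·A_p(e^{u}/√2, a₁, a₂, b₁, b₂) + A_k, and let B_λ be the entrywise complex conjugate of A_λ. Let F : ℂ → Matrix (Fin 5) (Fin 5) ℝ be ℝ-differentiable on U with F(z)ᵀ·F(z)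 = 1 on U and, regarding F as complex-matrix valued, ∂F = F·A_λ and ∂̄F = F·B_λ on U. Denote by f, N₁, N₂ the columns 0, 3, 4 of F regarded as maps into ℂ⁵. Then ∂f is ℝ-differentiable on U and for every z ∈ U: Σᵢ (∂̄(∂f)(z))ᵢ·(N₁(z))ᵢ = e^{2u(z)}·h₁(z), Σᵢ (∂̄(∂f)(z))ᵢ·(N₂(z))ᵢ = e^{2u(z)}·h₂(z), and Σᵢ (∂̄(∂f)(z))ᵢ·(f(z))ᵢ = −e^{2u(z)}. In particular these quantities do not depend on λ. (This shows that all members of the associated family have the same mean curvature components h₁, h₂, hence the same length of mean curvature vector.) -/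
open Complex Matrix

noncomputable section

attribute [local instance] Matrix.normedAddCommGroup Matrix.normedSpace

/-- The 𝔨-part A_k of the Maurer–Cartan form of an adapted frame. -/
def AKfun (u : ℂ → ℝ) (σ : ℂ → ℂ) (z : ℂ) : Matrix (Fin 5) (Fin 5) ℂ :=
  !![0, 0, 0, 0, 0;
     0, 0, Complex.I * wDz (fun w => (u w : ℂ)) z, 0, 0;
     0, -(Complex.I * wDz (fun w => (u w : ℂ)) z), 0, 0, 0;
     0, 0, 0, 0, σ z;
     0, 0, 0, -σ z, 0]

/-- The loop of Maurer–Cartan matrices A_λ = λ⁻¹A_𝔭 + A_𝔨. -/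
def Alam (lam : ℂ) (u h₁ h₂ : ℂ → ℝ) (ξ₁ ξ₂ σ : ℂ → ℂ) (z : ℂ) :
    Matrix (Fin 5) (Fin 5) ℂ :=
  lam⁻¹ • Ap ((Real.exp (u z) / Real.sqrt 2 : ℝ) : ℂ)
      (aCoef u ξ₁ h₁ z) (aCoef u ξ₂ h₂ z) (bCoef u ξ₁ h₁ z) (bCoef u ξ₂ h₂ z)
    + AKfun u σ z

/-- A real-matrix-valued map regarded as complex-matrix-valued. -/
def toC (F : ℂ → Matrix (Fin 5) (Fin 5) ℝ) : ℂ → Matrix (Fin 5) (Fin 5) ℂ :=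
  fun z => (F z).map (fun x => (x : ℂ))

/-- The j-th column of a real-matrix-valued map, regarded as a map into ℂ⁵. -/
def col (F : ℂ → Matrix (Fin 5) (Fin 5) ℝ) (j : Fin 5) : ℂ → Fin 5 → ℂ :=
  fun z i => ((F z i j : ℝ) : ℂ)

/-! Column 0 of `A_λ` is `λ⁻¹ r (e₁ - i e₂)` with `r = e^u/√2`, so `∂f = λ⁻¹ r F ν` for
`ν = e₁ - i e₂`, and then `∂̄F = F B_λ` gives `∂̄∂f = F v` with
`v = ∂̄(λ⁻¹ r) ν + λ⁻¹ r B_λ ν`. Since `F` is orthogonal, pairing with the columns `0, 3, 4`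
of `F` reads off `v₀, v₃, v₄`. In these entries the loop parameter cancels because
`conj λ⁻¹ = λ` on the unit circle, and `aᵢ - bᵢ = √2 e^u hᵢ` produces `e^{2u} hᵢ`. -/

open Topology

section Wirtinger

variable {E E' : Type*} [NormedAddCommGroup E] [NormedSpace ℂ E]
  [NormedAddCommGroup E'] [NormedSpace ℂ E']

theorem wDz_clm_comp (L : E →L[ℂ] E') {G : ℂ → E} {z : ℂ} (hG : DifferentiableAt ℝ G z) :
    wDz (fun w => L (G w)) z = L (wDz G z) := by
  have hL : fderiv ℝ (fun w => L (G w)) z = (L.restrictScalars ℝ).comp (fderiv ℝ G z) :=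
    ((L.restrictScalars ℝ).hasFDerivAt.comp z hG.hasFDerivAt).fderiv
  simp [wDz, hL]

theorem wDzBar_clm_comp (L : E →L[ℂ] E') {G : ℂ → E} {z : ℂ} (hG : DifferentiableAt ℝ G z) :
    wDzBar (fun w => L (G w)) z = L (wDzBar G z) := by
  have hL : fderiv ℝ (fun w => L (G w)) z = (L.restrictScalars ℝ).comp (fderiv ℝ G z) :=
    ((L.restrictScalars ℝ).hasFDerivAt.comp z hG.hasFDerivAt).fderiv
  simp [wDzBar, hL]

theorem wDzBar_smul {c : ℂ → ℂ} {G : ℂ → E} {z : ℂ} (hc : DifferentiableAt ℝ c z)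
    (hG : DifferentiableAt ℝ G z) :
    wDzBar (fun w => c w • G w) z = wDzBar c z • G z + c z • wDzBar G z := by
  simp only [wDzBar, fderiv_fun_smul hc hG, _root_.add_apply,
    _root_.smul_apply, ContinuousLinearMap.smulRight_apply, smul_eq_mul]
  module

end Wirtinger

section MatrixValued

variable {m n : Type*} [Fintype m] [Fintype n]

theorem wDz_mulVec {G : ℂ → Matrix m n ℂ} {z : ℂ} (hG : DifferentiableAt ℝ G z) (v : n → ℂ) :
    wDz (fun w => G w *ᵥ v) z = wDz G z *ᵥ v :=
  wDz_clm_comp ((mulVecBilin ℂ ℂ).flip v).toContinuousLinearMap hG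

theorem wDzBar_mulVec {G : ℂ → Matrix m n ℂ} {z : ℂ} (hG : DifferentiableAt ℝ G z)
    (v : n → ℂ) : wDzBar (fun w => G w *ᵥ v) z = wDzBar G z *ᵥ v :=
  wDzBar_clm_comp ((mulVecBilin ℂ ℂ).flip v).toContinuousLinearMap hG

theorem DifferentiableAt.mulVec_const {G : ℂ → Matrix m n ℂ} {z : ℂ}
    (hG : DifferentiableAt ℝ G z) (v : n → ℂ) : DifferentiableAt ℝ (fun w => G w *ᵥ v) z :=
  (((mulVecBilin ℂ ℂ).flip v).toContinuousLinearMap.restrictScalars ℝ).differentiableAt.comp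
    (g := fun M : Matrix m n ℂ => M *ᵥ v) z hG

theorem wDzBar_smul_mulVec {G : ℂ → Matrix m n ℂ} {B : Matrix n n ℂ} {c : ℂ → ℂ} {z : ℂ}
    (hc : DifferentiableAt ℝ c z) (hG : DifferentiableAt ℝ G z) (hGB : wDzBar G z = G z * B)
    (v : n → ℂ) :
    wDzBar (fun w => c w • (G w *ᵥ v)) z = G z *ᵥ (wDzBar c z • v + c z • (B *ᵥ v)) := by
  rw [wDzBar_smul hc (hG.mulVec_const v), wDzBar_mulVec hG, hGB, ← mulVec_mulVec, mulVec_add,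
    mulVec_smul, mulVec_smul]

end MatrixValued

theorem mulVec_dotProduct_mulVec_of_transpose_mul_self {R n : Type*} [CommRing R] [Fintype n]
    [DecidableEq n] {Q : Matrix n n R} (hQ : Qᵀ * Q = 1) (v w : n → R) :
    (Q *ᵥ v) ⬝ᵥ (Q *ᵥ w) = v ⬝ᵥ w := by
  rw [dotProduct_mulVec, vecMul_mulVec, hQ, vecMul_one]

section Frame

variable {F : ℂ → Matrix (Fin 5) (Fin 5) ℝ}

theorem DifferentiableAt.toC {z : ℂ} (hF : DifferentiableAt ℝ F z) :
    DifferentiableAt ℝ (toC F) z :=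
  differentiableAt_pi.2 fun i => differentiableAt_pi.2 fun j =>
    ofRealCLM.differentiableAt.comp z (differentiableAt_pi.1 (differentiableAt_pi.1 hF i) j)

theorem col_eq_toC_mulVec (j : Fin 5) (z : ℂ) :
    _root_.col F j z = toC F z *ᵥ Pi.single j 1 := by
  rw [mulVec_single_one]
  rfl

theorem toC_transpose_mul_self {z : ℂ} (hF : (F z)ᵀ * F z = 1) : (toC F z)ᵀ * toC F z = 1 := by
  have h := congrArg (Matrix.map · ofRealHom) hF
  rwa [Matrix.map_mul, transpose_map, Matrix.map_one _ (map_zero _) (map_one _)] at h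

end Frame

theorem Alam_mulVec_single_zero (lam : ℂ) (u h₁ h₂ : ℂ → ℝ) (ξ₁ ξ₂ σ : ℂ → ℂ) (z : ℂ) :
    Alam lam u h₁ h₂ ξ₁ ξ₂ σ z *ᵥ Pi.single 0 1
      = (lam⁻¹ * ((Real.exp (u z) / Real.sqrt 2 : ℝ) : ℂ)) • ![0, 1, -I, 0, 0] := by
  ext k
  fin_cases k <;> simp [Alam, Ap, AKfun]
  ring

theorem smul_conj_Alam_mulVec {lam : ℂ} (hlam : ‖lam‖ = 1) (u h₁ h₂ : ℂ → ℝ) (ξ₁ ξ₂ σ : ℂ → ℂ)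
    (z : ℂ) :
    (lam⁻¹ * ((Real.exp (u z) / Real.sqrt 2 : ℝ) : ℂ)) •
        ((Alam lam u h₁ h₂ ξ₁ ξ₂ σ z).map (starRingEnd ℂ) *ᵥ ![0, 1, -I, 0, 0])
      = ![-(Real.exp (2 * u z) : ℂ),
          -(lam⁻¹ * ((Real.exp (u z) / Real.sqrt 2 : ℝ) : ℂ) *
            starRingEnd ℂ (wDz (fun w => (u w : ℂ)) z)),
          I * (lam⁻¹ * ((Real.exp (u z) / Real.sqrt 2 : ℝ) : ℂ) *
            starRingEnd ℂ (wDz (fun w => (u w : ℂ)) z)),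
          (Real.exp (2 * u z) : ℂ) * (h₁ z : ℂ), (Real.exp (2 * u z) : ℂ) * (h₂ z : ℂ)] := by
  have hconj : starRingEnd ℂ lam = lam⁻¹ := (inv_eq_conj hlam).symm
  have hlam0 : lam ≠ 0 := norm_ne_zero_iff.1 (by simp [hlam])
  have hsqrt : ((Real.sqrt 2 : ℝ) : ℂ) ^ 2 = 2 := by norm_cast; simp
  have hexp : cexp (2 * (u z : ℂ)) = cexp (u z) ^ 2 := by rw [← exp_nat_mul]; ring_nf
  ext k
  fin_cases k <;>
    simp [Alam, Ap, AKfun, aCoef, bCoef, mulVec, dotProduct, Fin.sum_univ_five, ← exp_conj,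
      hconj, hexp] <;>
    field_simp <;> simp only [I_sq, hsqrt] <;> ring

theorem wDz_col_zero {F : ℂ → Matrix (Fin 5) (Fin 5) ℝ} {lam : ℂ} {u h₁ h₂ : ℂ → ℝ}
    {ξ₁ ξ₂ σ : ℂ → ℂ} {z : ℂ} (hF : DifferentiableAt ℝ F z)
    (hMC : wDz (toC F) z = toC F z * Alam lam u h₁ h₂ ξ₁ ξ₂ σ z) :
    wDz (_root_.col F 0) z
      = (lam⁻¹ * ((Real.exp (u z) / Real.sqrt 2 : ℝ) : ℂ)) • (toC F z *ᵥ ![0, 1, -I, 0, 0]) := by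
  rw [show _root_.col F 0 = fun w => toC F w *ᵥ Pi.single 0 1 from funext (col_eq_toC_mulVec 0),
    wDz_mulVec hF.toC, hMC, ← mulVec_mulVec, Alam_mulVec_single_zero, mulVec_smul]

theorem associated_family_mean_curvature_general
    (U : Set ℂ) (hU : IsOpen U)
    (u h₁ h₂ : ℂ → ℝ) (ξ₁ ξ₂ σ : ℂ → ℂ)
    (hu : ∀ z ∈ U, DifferentiableAt ℝ (fun w => (u w : ℂ)) z)
    (lam : ℂ) (hlam : ‖lam‖ = 1)
    (F : ℂ → Matrix (Fin 5) (Fin 5) ℝ)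
    (hF : ∀ z ∈ U, DifferentiableAt ℝ F z)
    (horth : ∀ z ∈ U, (F z)ᵀ * F z = 1)
    (hMC : ∀ z ∈ U, wDz (toC F) z = toC F z * Alam lam u h₁ h₂ ξ₁ ξ₂ σ z)
    (hMCbar : ∀ z ∈ U, wDzBar (toC F) z
      = toC F z * (Alam lam u h₁ h₂ ξ₁ ξ₂ σ z).map (starRingEnd ℂ)) :
    (∀ z ∈ U, DifferentiableAt ℝ (fun w => wDz (_root_.col F 0) w) z) ∧
    (∀ z ∈ U,
      (∑ i : Fin 5, wDzBar (fun w => wDz (_root_.col F 0) w) z i * _root_.col F 3 z i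
          = (Real.exp (2 * u z) : ℂ) * (h₁ z : ℂ)) ∧
      (∑ i : Fin 5, wDzBar (fun w => wDz (_root_.col F 0) w) z i * _root_.col F 4 z i
          = (Real.exp (2 * u z) : ℂ) * (h₂ z : ℂ)) ∧
      (∑ i : Fin 5, wDzBar (fun w => wDz (_root_.col F 0) w) z i * _root_.col F 0 z i
          = -(Real.exp (2 * u z) : ℂ))) := by
  let c : ℂ → ℂ := fun w => lam⁻¹ * ((Real.exp (u w) / Real.sqrt 2 : ℝ) : ℂ)
  let ν : Fin 5 → ℂ := ![0, 1, -I, 0, 0]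
  have hc : ∀ z ∈ U, DifferentiableAt ℝ c z := fun z hz => by
    have hexp : DifferentiableAt ℝ (fun w => cexp (u w : ℂ)) z := (hu z hz).cexp
    simpa [c, div_eq_mul_inv] using (hexp.mul_const ((Real.sqrt 2 : ℂ))⁻¹).const_mul lam⁻¹
  have hdf : ∀ z ∈ U, wDz (_root_.col F 0) =ᶠ[𝓝 z] fun w => c w • (toC F w *ᵥ ν) :=
    fun z hz => Filter.eventuallyEq_of_mem (hU.mem_nhds hz) fun w hw =>
      wDz_col_zero (hF w hw) (hMC w hw)
  refine ⟨fun z hz =>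
    ((hc z hz).smul ((hF z hz).toC.mulVec_const ν)).congr_of_eventuallyEq (hdf z hz),
    fun z hz => ?_⟩
  have hpair : ∀ j, ∑ i, wDzBar (fun w => wDz (_root_.col F 0) w) z i * _root_.col F j z i
      = (wDzBar c z • ν + c z • ((Alam lam u h₁ h₂ ξ₁ ξ₂ σ z).map (starRingEnd ℂ) *ᵥ ν)) j := by
    intro j
    change wDzBar (wDz (_root_.col F 0)) z ⬝ᵥ _root_.col F j z = _
    rw [show wDzBar (wDz (_root_.col F 0)) z = wDzBar (fun w => c w • (toC F w *ᵥ ν)) z by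
        simp only [wDzBar, (hdf z hz).fderiv_eq],
      wDzBar_smul_mulVec (hc z hz) (hF z hz).toC (hMCbar z hz), col_eq_toC_mulVec,
      mulVec_dotProduct_mulVec_of_transpose_mul_self (toC_transpose_mul_self (horth z hz)),
      dotProduct_single_one]
  simp only [hpair, Pi.add_apply, c, ν, smul_conj_Alam_mulVec hlam]
  simp

/-- all members of the associated family have the same mean
curvature components h₁, h₂: ⟨f_{z̄z}, Nᵢ(λ)⟩ = e^{2u}hᵢ and
⟨f_{z̄z}, f⟩ = −e^{2u}, independently of λ. -/
theorem associated_family_mean_curvature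
    (U : Set ℂ) (hU : IsOpen U)
    (u h₁ h₂ : ℂ → ℝ) (ξ₁ ξ₂ σ : ℂ → ℂ)
    (hu : ∀ z ∈ U, DifferentiableAt ℝ (fun w => (u w : ℂ)) z)
    (hh₁ : ∀ z ∈ U, DifferentiableAt ℝ (fun w => (h₁ w : ℂ)) z)
    (hh₂ : ∀ z ∈ U, DifferentiableAt ℝ (fun w => (h₂ w : ℂ)) z)
    (hξ₁ : ∀ z ∈ U, DifferentiableAt ℝ ξ₁ z)
    (hξ₂ : ∀ z ∈ U, DifferentiableAt ℝ ξ₂ z)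
    (hσ : ∀ z ∈ U, DifferentiableAt ℝ σ z)
    (lam : ℂ) (hlam : ‖lam‖ = 1)
    (F : ℂ → Matrix (Fin 5) (Fin 5) ℝ)
    (hF : ∀ z ∈ U, DifferentiableAt ℝ F z)
    (horth : ∀ z ∈ U, (F z)ᵀ * F z = 1)
    (hMC : ∀ z ∈ U, wDz (toC F) z = toC F z * Alam lam u h₁ h₂ ξ₁ ξ₂ σ z)
    (hMCbar : ∀ z ∈ U, wDzBar (toC F) z
      = toC F z * (Alam lam u h₁ h₂ ξ₁ ξ₂ σ z).map (starRingEnd ℂ)) :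
    (∀ z ∈ U, DifferentiableAt ℝ (fun w => wDz (_root_.col F 0) w) z) ∧
    (∀ z ∈ U,
      (∑ i : Fin 5, wDzBar (fun w => wDz (_root_.col F 0) w) z i * _root_.col F 3 z i
          = (Real.exp (2 * u z) : ℂ) * (h₁ z : ℂ)) ∧
      (∑ i : Fin 5, wDzBar (fun w => wDz (_root_.col F 0) w) z i * _root_.col F 4 z i
          = (Real.exp (2 * u z) : ℂ) * (h₂ z : ℂ)) ∧
      (∑ i : Fin 5, wDzBar (fun w => wDz (_root_.col F 0) w) z i * _root_.col F 0 z i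
          = -(Real.exp (2 * u z) : ℂ))) :=
  associated_family_mean_curvature_general U hU u h₁ h₂ ξ₁ ξ₂ σ hu lam hlam F hF horth hMC hMCbar
end
end
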